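/- Let R be an n×m complex matrix with m ≥ n whose rows are unit vectors in the Euclidean norm, D = diag(σ₁,…,σ_n) with σ_i ≥ 0, and B(k) the n×n cyclic column submatrices of R. Then Σ_{k=1}^m ‖D B(k) D‖_* ≤ √m · (Σ_{k=1}^n σ_k)². -/

import Mathlib

/-!
Diagonalising `Aᴴ A` gives an orthonormal basis `v` whose images `A v j` are pairwise orthogonal
with `‖A v j‖ = √λⱼ`, so `‖A‖_* = ∑ ‖A v j‖`. The map `S` sending `v j` to `A v j / ‖A v j‖` is a
contraction with `∑ ‖A v j‖ = tr (S⋆ A) = ∑ conj (S i l) A i l`, and the entries of a contraction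
have modulus at most `1`; hence `‖A‖_* ≤ ∑ |A i l|`. For `A = D B(k) D` the entries are
`σᵢ σⱼ |R i (j + k)|`; summing over `k` runs once through row `i` of `R`, whose `ℓ¹` norm is at
most `√m` by Cauchy–Schwarz.
-/

open Matrix

/-- The nuclear (Schatten-1, trace) norm: the sum of the singular values. -/
noncomputable def nuclearNorm {n m : ℕ} (A : Matrix (Fin n) (Fin m) ℂ) : ℝ :=
  ∑ j, Real.sqrt ((Matrix.isHermitian_conjTranspose_mul_self A).eigenvalues j)

/-- The `n×n` submatrix of an `n×m` matrix `R` formed by `n` cyclically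
consecutive columns starting after column `k` (indices mod `m`). -/
def cycSub {n m : ℕ} (R : Matrix (Fin n) (Fin m) ℂ) (k : Fin m) :
    Matrix (Fin n) (Fin n) ℂ :=
  Matrix.of fun i j => R i ⟨(j.val + k.val) % m, Nat.mod_lt _ k.pos⟩

open Finset
open scoped InnerProductSpace

section InnerProductSpace

variable {𝕜 : Type*} [RCLike 𝕜]
  {E : Type*} [NormedAddCommGroup E] [InnerProductSpace 𝕜 E]
  {F : Type*} [NormedAddCommGroup F] [InnerProductSpace 𝕜 F]

theorem norm_sum_smul_sq_of_pairwise_inner_eq_zero {ι : Type*} [Fintype ι] {u : ι → F}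
    (h : Pairwise fun j k => ⟪u j, u k⟫_𝕜 = 0) (a : ι → 𝕜) :
    ‖∑ j, a j • u j‖ ^ 2 = ∑ j, ‖a j‖ ^ 2 * ‖u j‖ ^ 2 := by
  have : ((‖∑ j, a j • u j‖ ^ 2 : ℝ) : 𝕜) = ((∑ j, ‖a j‖ ^ 2 * ‖u j‖ ^ 2 : ℝ) : 𝕜) := by
    push_cast
    rw [← inner_self_eq_norm_sq_to_K, sum_inner]
    refine sum_congr rfl fun j _ => ?_
    rw [inner_sum, sum_eq_single j (fun k _ hk => by
        rw [inner_smul_left, inner_smul_right, h (Ne.symm hk), mul_zero, mul_zero])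
      (by simp), inner_smul_left, inner_smul_right, inner_self_eq_norm_sq_to_K, ← mul_assoc,
      RCLike.conj_mul]
  exact_mod_cast this

theorem OrthonormalBasis.norm_sum_inner_smul_le {κ : Type*} [Fintype κ]
    (v : OrthonormalBasis κ 𝕜 E) {u : κ → F} (horth : Pairwise fun j k => ⟪u j, u k⟫_𝕜 = 0)
    (hu : ∀ j, ‖u j‖ ≤ 1) (x : E) :
    ‖∑ j, ⟪v j, x⟫_𝕜 • u j‖ ≤ ‖x‖ := by
  refine (pow_le_pow_iff_left₀ (norm_nonneg _) (norm_nonneg _) two_ne_zero).mp ?_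
  calc ‖∑ j, ⟪v j, x⟫_𝕜 • u j‖ ^ 2 = ∑ j, ‖⟪v j, x⟫_𝕜‖ ^ 2 * ‖u j‖ ^ 2 :=
        norm_sum_smul_sq_of_pairwise_inner_eq_zero horth _
    _ ≤ ∑ j, ‖⟪v j, x⟫_𝕜‖ ^ 2 := by
        gcongr with j
        exact mul_le_of_le_one_right (by positivity) (pow_le_one₀ (norm_nonneg _) (hu j))
    _ = ‖x‖ ^ 2 := v.sum_sq_norm_inner_right x

theorem OrthonormalBasis.sum_inner_apply_eq {κ ι : Type*} [Fintype κ] [Fintype ι]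
    (v : OrthonormalBasis κ 𝕜 E) (e : OrthonormalBasis ι 𝕜 E) (T : E →ₗ[𝕜] F) (u : κ → F) :
    ∑ j, ⟪u j, T (v j)⟫_𝕜 = ∑ l, ⟪∑ j, ⟪v j, e l⟫_𝕜 • u j, T (e l)⟫_𝕜 := by
  calc ∑ j, ⟪u j, T (v j)⟫_𝕜 = ∑ j, ∑ l, ⟪e l, v j⟫_𝕜 * ⟪u j, T (e l)⟫_𝕜 := by
        refine sum_congr rfl fun j _ => ?_
        conv_lhs => rw [← e.sum_repr' (v j)]
        simp only [map_sum, map_smul, inner_sum, inner_smul_right]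
    _ = ∑ l, ⟪∑ j, ⟪v j, e l⟫_𝕜 • u j, T (e l)⟫_𝕜 := by
        rw [sum_comm]
        simp only [sum_inner, inner_smul_left, inner_conj_symm]

-- As `T` maps `v` to an orthogonal family, the left side is the nuclear norm of `T`.
theorem sum_norm_apply_le_sum_norm_inner {κ ι ι' : Type*} [Fintype κ] [Fintype ι] [Fintype ι']
    (T : E →ₗ[𝕜] F) (v : OrthonormalBasis κ 𝕜 E)
    (horth : Pairwise fun j k => ⟪T (v j), T (v k)⟫_𝕜 = 0)
    (e : OrthonormalBasis ι 𝕜 E) (f : OrthonormalBasis ι' 𝕜 F) :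
    ∑ j, ‖T (v j)‖ ≤ ∑ l, ∑ i, ‖⟪f i, T (e l)⟫_𝕜‖ := by
  set u : κ → F := fun j => (‖T (v j)‖ : 𝕜)⁻¹ • T (v j)
  have hu_orth : Pairwise fun j k => ⟪u j, u k⟫_𝕜 = 0 := fun j k hjk => by
    simp only [u, inner_smul_left, inner_smul_right, horth hjk, mul_zero]
  have hu_norm (j : κ) : ‖u j‖ ≤ 1 := by
    by_cases h : T (v j) = 0
    · simp [u, h]
    · exact (norm_smul_inv_norm (𝕜 := 𝕜) h).le
  have hu_inner (j : κ) : ⟪u j, T (v j)⟫_𝕜 = ‖T (v j)‖ := by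
    rw [inner_smul_left, map_inv₀, RCLike.conj_ofReal, inner_self_eq_norm_sq_to_K]
    by_cases h : ‖T (v j)‖ = 0
    · simp [h]
    · field_simp
  -- `S` is the partial isometry of the polar decomposition `T = S |T|`.
  set S : E → F := fun x => ∑ j, ⟪v j, x⟫_𝕜 • u j
  have htrace : ∑ j, (‖T (v j)‖ : 𝕜) = ∑ l, ∑ i, ⟪S (e l), f i⟫_𝕜 * ⟪f i, T (e l)⟫_𝕜 := by
    simp only [← hu_inner, v.sum_inner_apply_eq e, f.sum_inner_mul_inner, S]
  calc ∑ j, ‖T (v j)‖ = RCLike.re (∑ j, (‖T (v j)‖ : 𝕜)) := by simp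
    _ = RCLike.re (∑ l, ∑ i, ⟪S (e l), f i⟫_𝕜 * ⟪f i, T (e l)⟫_𝕜) := by rw [htrace]
    _ ≤ ∑ l, ∑ i, ‖⟪S (e l), f i⟫_𝕜 * ⟪f i, T (e l)⟫_𝕜‖ :=
        (RCLike.re_le_norm _).trans <| (norm_sum_le _ _).trans <| sum_le_sum fun l _ =>
          norm_sum_le _ _
    _ ≤ ∑ l, ∑ i, ‖⟪f i, T (e l)⟫_𝕜‖ := by
        gcongr with l _ i
        rw [norm_mul]
        refine mul_le_of_le_one_left (norm_nonneg _) ?_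
        calc ‖⟪S (e l), f i⟫_𝕜‖ ≤ ‖S (e l)‖ * ‖f i‖ := norm_inner_le_norm _ _
          _ ≤ 1 := by simpa [f.norm_eq_one, e.norm_eq_one] using
                v.norm_sum_inner_smul_le hu_orth hu_norm (e l)

end InnerProductSpace

section Matrix

variable {𝕜 : Type*} [RCLike 𝕜]

theorem inner_toEuclideanLin_eigenvectorBasis {ι κ : Type*} [Fintype ι] [Fintype κ] [DecidableEq κ]
    (A : Matrix ι κ 𝕜) (j k : κ) :
    ⟪A.toEuclideanLin ((isHermitian_conjTranspose_mul_self A).eigenvectorBasis j),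
      A.toEuclideanLin ((isHermitian_conjTranspose_mul_self A).eigenvectorBasis k)⟫_𝕜 =
      if j = k then ((isHermitian_conjTranspose_mul_self A).eigenvalues j : 𝕜) else 0 := by
  set hH := isHermitian_conjTranspose_mul_self A
  have h := congr(star ⇑(hH.eigenvectorBasis j) ⬝ᵥ $(hH.mulVec_eigenvectorBasis k))
  rw [← mulVec_mulVec, dotProduct_mulVec, ← star_mulVec] at h
  rw [EuclideanSpace.inner_eq_star_dotProduct, dotProduct_comm]
  simp only [toLpLin_apply, WithLp.ofLp_toLp]
  rw [h, dotProduct_comm, ← EuclideanSpace.inner_eq_star_dotProduct, WithLp.toLp_smul,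
    WithLp.toLp_ofLp, inner_smul_right_eq_smul, hH.eigenvectorBasis.inner_eq_ite]
  split_ifs with hjk
  · subst hjk; simp [RCLike.real_smul_eq_coe_mul]
  · simp

theorem nuclearNorm_eq_sum_norm_toEuclideanLin_eigenvectorBasis {n m : ℕ}
    (A : Matrix (Fin n) (Fin m) ℂ) :
    nuclearNorm A =
      ∑ j, ‖A.toEuclideanLin ((isHermitian_conjTranspose_mul_self A).eigenvectorBasis j)‖ := by
  refine sum_congr rfl fun j _ => ?_
  rw [@norm_eq_sqrt_re_inner ℂ, inner_toEuclideanLin_eigenvectorBasis, if_pos rfl,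
    RCLike.ofReal_re]

theorem nuclearNorm_le_sum_norm {n m : ℕ} (A : Matrix (Fin n) (Fin m) ℂ) :
    nuclearNorm A ≤ ∑ i, ∑ j, ‖A i j‖ := by
  rw [nuclearNorm_eq_sum_norm_toEuclideanLin_eigenvectorBasis, sum_comm]
  convert sum_norm_apply_le_sum_norm_inner A.toEuclideanLin
    (isHermitian_conjTranspose_mul_self A).eigenvectorBasis
    (fun j k hjk => (inner_toEuclideanLin_eigenvectorBasis A j k).trans (if_neg hjk))
    (EuclideanSpace.basisFun _ ℂ) (EuclideanSpace.basisFun _ ℂ) using 3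
  simp [EuclideanSpace.inner_single_left, toLpLin_apply]

end Matrix

theorem sum_cycSub_apply {M : Type*} [AddCommMonoid M] {n m : ℕ} (hnm : n ≤ m)
    (R : Matrix (Fin n) (Fin m) ℂ) (g : ℂ → M) (i j : Fin n) :
    ∑ k, g (cycSub R k i j) = ∑ l, g (R i l) := by
  have : NeZero m := ⟨(j.pos.trans_le hnm).ne'⟩
  refine Fintype.sum_equiv (Equiv.addLeft (Fin.castLE hnm j)) _ _ fun k => ?_
  simp [cycSub, Fin.add_def]

/-- For an `n×m` complex matrix `R` (`m ≥ n`) whose rows are unit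
vectors, and `D = diag(σ₁,…,σₙ)` with `σᵢ ≥ 0`,
`Σₖ ‖D B(k) D‖_* ≤ √m (Σₖ σₖ)²`. -/
theorem stmt16 {n m : ℕ} (R : Matrix (Fin n) (Fin m) ℂ) (hnm : n ≤ m)
    (hrows : ∀ i, ∑ j, ‖R i j‖ ^ 2 = 1)
    (σ : Fin n → ℝ) (hσ : ∀ i, 0 ≤ σ i) :
    ∑ k : Fin m,
        nuclearNorm (Matrix.diagonal (fun i => (σ i : ℂ)) * cycSub R k
          * Matrix.diagonal (fun i => (σ i : ℂ)))
      ≤ Real.sqrt m * (∑ i, σ i) ^ 2 := by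
  have hrow (i : Fin n) : ∑ l, ‖R i l‖ ≤ Real.sqrt m := by
    simpa [hrows i] using Real.sum_mul_le_sqrt_mul_sqrt univ (fun _ => (1 : ℝ)) (‖R i ·‖)
  calc _ ≤ ∑ k, ∑ i, ∑ j, ‖(diagonal (fun i => (σ i : ℂ)) * cycSub R k
          * diagonal (fun i => (σ i : ℂ))) i j‖ :=
        sum_le_sum fun k _ => nuclearNorm_le_sum_norm _
    _ = ∑ i, ∑ j, σ i * σ j * ∑ k, ‖cycSub R k i j‖ := by
        rw [sum_comm]
        refine sum_congr rfl fun i _ => ?_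
        rw [sum_comm]
        refine sum_congr rfl fun j _ => ?_
        simp only [mul_diagonal, diagonal_mul, norm_mul, Complex.norm_real,
          Real.norm_of_nonneg (hσ _), mul_sum]
        exact sum_congr rfl fun k _ => by ring
    _ = ∑ i, ∑ j, σ i * σ j * ∑ l, ‖R i l‖ := by simp only [sum_cycSub_apply hnm R (‖·‖)]
    _ ≤ ∑ i, ∑ j, σ i * σ j * Real.sqrt m := by
        gcongr with i _ j _
        · exact mul_nonneg (hσ i) (hσ j)
        · exact hrow i
    _ = Real.sqrt m * (∑ i, σ i) ^ 2 := by
        rw [sq, sum_mul_sum, mul_sum]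
        simp only [mul_sum]
        exact sum_congr rfl fun i _ => sum_congr rfl fun j _ => mul_comm _ _
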